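/- arXiv:2605.26550 — 5 statements merged into one kernel-verified Lean document; each statement's English description precedes it below -/
import Mathlib

section
/- Let S be the smallest set of functions ℝ → ℝ containing g₂(t) = 1 - t/2 and closed under pointwise addition and composition. Then for every f ∈ S, every integer m and every natural number r, the function t ↦ (m/2^r)·f(t) belongs to S. -/
theorem stmt3 (S : Set (ℝ → ℝ))
    (hg₂ : (fun t : ℝ => 1 - t / 2) ∈ S)
    (hadd : ∀ f ∈ S, ∀ h ∈ S, (f + h) ∈ S)
    (hcomp : ∀ f ∈ S, ∀ h ∈ S, (f ∘ h) ∈ S)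
    (hmin : ∀ T : Set (ℝ → ℝ), (fun t : ℝ => 1 - t / 2) ∈ T →
      (∀ f ∈ T, ∀ h ∈ T, (f + h) ∈ T) →
      (∀ f ∈ T, ∀ h ∈ T, (f ∘ h) ∈ T) → S ⊆ T) :
    ∀ f ∈ S, ∀ (m : ℤ) (r : ℕ),
      (fun t : ℝ => ((m : ℝ) / 2 ^ r) * f t) ∈ S := by
  have h2t : (fun t : ℝ => 2 - t) ∈ S := by
    have h := hadd _ hg₂ _ hg₂
    convert h using 1; funext t; show 2 - t = (1 - t/2) + (1 - t/2); ring
  have hid : (fun t : ℝ => t) ∈ S := by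
    have h := hcomp _ h2t _ h2t
    convert h using 1; funext t; show t = 2 - (2 - t); ring
  have h2pt : (fun t : ℝ => 2 + t) ∈ S := by
    have h := hadd _ (hadd _ h2t _ hid) _ hid
    convert h using 1; funext t; show 2 + t = (2 - t + t) + t; ring
  have hneg : (fun t : ℝ => -t) ∈ S := by
    have h := hcomp _ h2t _ h2pt
    convert h using 1; funext t; show -t = 2 - (2 + t); ring
  have hnegf : ∀ f ∈ S, (fun t => -f t) ∈ S := by
    intro f hf; exact hcomp _ hneg _ hf
  have hzero : (fun _ : ℝ => (0:ℝ)) ∈ S := by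
    have h := hadd _ hid _ hneg
    convert h using 1; funext t; show (0:ℝ) = t + (-t); ring
  have hone : (fun _ : ℝ => (1:ℝ)) ∈ S := by
    have h := hcomp _ hg₂ _ hzero
    convert h using 1; funext t; show (1:ℝ) = 1 - 0/2; ring
  have hhalf : (fun t : ℝ => t / 2) ∈ S := by
    have h := hadd _ (hnegf _ hg₂) _ hone
    convert h using 1; funext t; show t/2 = -(1 - t/2) + 1; ring
  have hhalff : ∀ f ∈ S, (fun t => f t / 2) ∈ S := by
    intro f hf; exact hcomp _ hhalf _ hf
  have hnat : ∀ (n : ℕ), ∀ f ∈ S, (fun t => (n:ℝ) * f t) ∈ S := by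
    intro n
    induction n with
    | zero => intro f hf; convert hzero using 1; funext t; simp
    | succ k ih =>
      intro f hf
      have h := hadd _ (ih f hf) _ hf
      convert h using 1; funext t
      show ((k:ℕ)+1 : ℕ) * f t = (k:ℝ) * f t + f t
      push_cast; ring
  have hint : ∀ (m : ℤ), ∀ f ∈ S, (fun t => (m:ℝ) * f t) ∈ S := by
    intro m f hf
    obtain ⟨n, rfl | rfl⟩ := m.eq_nat_or_neg
    · exact_mod_cast hnat n f hf
    · have h := hnegf _ (hnat n f hf)
      convert h using 1; funext t; push_cast; ring
  intro f hf m r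
  induction r with
  | zero =>
    convert hint m f hf using 1; funext t; norm_num
  | succ k ih =>
    have h := hhalff _ ih
    convert h using 1; funext t
    show (m:ℝ)/2^(k+1) * f t = ((m:ℝ)/2^k * f t)/2
    rw [pow_succ]; ring
end

section
/- Let S be the smallest set of functions ℝ → ℝ containing g₂(t) = 1 - t/2 and closed under pointwise addition and composition. Then every affine function t ↦ a·t + b with dyadic rational coefficients a and b belongs to S. -/
/-!
With `d t = 2 - t = g₂ t + g₂ t`, composition gives `d ∘ d = id`, `g₂ ∘ d = (· / 2)` and
`d ∘ (id + d) = 0`, while `d ∘ (id + id + d) = -id`. Hence `S` is an additive subgroup that is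
stable under halving and contains `id` and the constant `1`; every dyadic affine map
`t ↦ (m / 2 ^ r) t + n / 2 ^ s` is an integer combination of `id / 2 ^ r` and `1 / 2 ^ s`.
-/

namespace AddCompClosure

variable {K : Type*} [Field K] [NeZero (2 : K)] {S : Set (K → K)}

lemma two_sub_mem (hg : (fun t : K => 1 - t / 2) ∈ S) (hadd : ∀ f ∈ S, ∀ h ∈ S, f + h ∈ S) :
    (fun t : K => 2 - t) ∈ S := by
  convert hadd _ hg _ hg using 1
  funext t
  simp only [Pi.add_apply]
  field_simp
  ring

lemma id_mem (hg : (fun t : K => 1 - t / 2) ∈ S) (hadd : ∀ f ∈ S, ∀ h ∈ S, f + h ∈ S)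
    (hcomp : ∀ f ∈ S, ∀ h ∈ S, f ∘ h ∈ S) : id ∈ S := by
  have hd := two_sub_mem hg hadd
  convert hcomp _ hd _ hd using 1
  funext t
  simp

lemma div_two_mem (hg : (fun t : K => 1 - t / 2) ∈ S) (hadd : ∀ f ∈ S, ∀ h ∈ S, f + h ∈ S)
    (hcomp : ∀ f ∈ S, ∀ h ∈ S, f ∘ h ∈ S) {f : K → K} (hf : f ∈ S) :
    (fun t => f t / 2) ∈ S := by
  have hhalf : (fun t : K => t / 2) ∈ S := by
    convert hcomp _ hg _ (two_sub_mem hg hadd) using 1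
    funext t
    simp only [Function.comp_apply]
    field_simp
    ring
  exact hcomp _ hhalf _ hf

lemma div_two_pow_mem (hg : (fun t : K => 1 - t / 2) ∈ S) (hadd : ∀ f ∈ S, ∀ h ∈ S, f + h ∈ S)
    (hcomp : ∀ f ∈ S, ∀ h ∈ S, f ∘ h ∈ S) {f : K → K} (hf : f ∈ S) (r : ℕ) :
    (fun t => f t / 2 ^ r) ∈ S := by
  induction r with
  | zero => simpa using hf
  | succ r ih =>
    convert div_two_mem hg hadd hcomp ih using 1
    funext t
    rw [pow_succ, div_div]

def toAddSubgroup (hg : (fun t : K => 1 - t / 2) ∈ S) (hadd : ∀ f ∈ S, ∀ h ∈ S, f + h ∈ S)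
    (hcomp : ∀ f ∈ S, ∀ h ∈ S, f ∘ h ∈ S) : AddSubgroup (K → K) where
  carrier := S
  add_mem' := fun hf hh => hadd _ hf _ hh
  zero_mem' := by
    have hd := two_sub_mem hg hadd
    convert hcomp _ hd _ (hadd _ (id_mem hg hadd hcomp) _ hd) using 1
    funext t
    simp
  neg_mem' := by
    intro f hf
    have hd := two_sub_mem hg hadd
    have hid := id_mem hg hadd hcomp
    have hneg : (fun t : K => -t) ∈ S := by
      convert hcomp _ hd _ (hadd _ (hadd _ hid _ hid) _ hd) using 1
      funext t
      simp only [Function.comp_apply, Pi.add_apply, id]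
      ring
    exact hcomp _ hneg _ hf

lemma one_mem (hg : (fun t : K => 1 - t / 2) ∈ S) (hadd : ∀ f ∈ S, ∀ h ∈ S, f + h ∈ S)
    (hcomp : ∀ f ∈ S, ∀ h ∈ S, f ∘ h ∈ S) : (fun _ => 1 : K → K) ∈ S := by
  have hd := two_sub_mem hg hadd
  convert div_two_mem hg hadd hcomp (hadd _ (id_mem hg hadd hcomp) _ hd) using 1
  funext t
  simp only [Pi.add_apply, id]
  field_simp
  ring

lemma zsmul_mem (hg : (fun t : K => 1 - t / 2) ∈ S) (hadd : ∀ f ∈ S, ∀ h ∈ S, f + h ∈ S)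
    (hcomp : ∀ f ∈ S, ∀ h ∈ S, f ∘ h ∈ S) {f : K → K} (hf : f ∈ S) (m : ℤ) : m • f ∈ S :=
  (toAddSubgroup hg hadd hcomp).zsmul_mem hf m

end AddCompClosure

open AddCompClosure in
theorem stmt4_general (S : Set (ℝ → ℝ))
    (hg₂ : (fun t : ℝ => 1 - t / 2) ∈ S)
    (hadd : ∀ f ∈ S, ∀ h ∈ S, (f + h) ∈ S)
    (hcomp : ∀ f ∈ S, ∀ h ∈ S, (f ∘ h) ∈ S) :
    ∀ a b : ℝ, (∃ (m : ℤ) (r : ℕ), a = (m : ℝ) / 2 ^ r) →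
      (∃ (m : ℤ) (r : ℕ), b = (m : ℝ) / 2 ^ r) →
      (fun t : ℝ => a * t + b) ∈ S := by
  rintro a b ⟨m, r, rfl⟩ ⟨n, s, rfl⟩
  have hid := id_mem hg₂ hadd hcomp
  have hone := one_mem hg₂ hadd hcomp
  convert hadd _ (zsmul_mem hg₂ hadd hcomp (div_two_pow_mem hg₂ hadd hcomp hid r) m)
    _ (zsmul_mem hg₂ hadd hcomp (div_two_pow_mem hg₂ hadd hcomp hone s) n) using 1
  funext t
  rw [Pi.add_apply, Pi.smul_apply, Pi.smul_apply, zsmul_eq_mul, zsmul_eq_mul, id]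
  ring

theorem stmt4 (S : Set (ℝ → ℝ))
    (hg₂ : (fun t : ℝ => 1 - t / 2) ∈ S)
    (hadd : ∀ f ∈ S, ∀ h ∈ S, (f + h) ∈ S)
    (hcomp : ∀ f ∈ S, ∀ h ∈ S, (f ∘ h) ∈ S)
    (hmin : ∀ T : Set (ℝ → ℝ), (fun t : ℝ => 1 - t / 2) ∈ T →
      (∀ f ∈ T, ∀ h ∈ T, (f + h) ∈ T) →
      (∀ f ∈ T, ∀ h ∈ T, (f ∘ h) ∈ T) → S ⊆ T) :
    ∀ a b : ℝ, (∃ (m : ℤ) (r : ℕ), a = (m : ℝ) / 2 ^ r) →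
      (∃ (m : ℤ) (r : ℕ), b = (m : ℝ) / 2 ^ r) →
      (fun t : ℝ => a * t + b) ∈ S :=
  stmt4_general S hg₂ hadd hcomp
end

section
/- Let S be the smallest set of functions ℝ → ℝ containing a polynomial function g₁ of degree at least 2 and g₂(t) = 1 - t/2, and closed under pointwise addition and composition. Then every polynomial function ℝ → ℝ belongs to the closure of S under uniform convergence on compact sets. -/
/-!
Work in the closure `T` of `S` inside `C(ℝ, ℝ)` with the compact-open topology, which is still
closed under addition and composition. From `t ↦ 1 - t / 2` one builds `t ↦ 2 - t`, the identity,
negation and `t ↦ t / 2`, so the slopes `c` with `t ↦ c * t` in `T` form a subring of `ℝ`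
containing `1 / 2`; it is dense and closed, hence all of `ℝ`. Thus `T` is a real vector space
containing the constants, and the polynomials in `T` form a subspace closed under composition.
Finite differences `q(X + 1) - q` lower the degree of `g₁` to a quadratic `r`, from which
`r ∘ q` gives `q ^ 2`, and polarization gives all products.
-/

open Polynomial

namespace Polynomial

variable {R : Type*}

lemma coeff_taylor_one [CommSemiring R] (q : R[X]) (m : ℕ) :
    (taylor 1 q).coeff m = ∑ e ∈ Finset.range (q.natDegree + 1), q.coeff e * e.choose m := by
  rw [taylor_apply, C_1, comp_eq_sum_left, Polynomial.sum_over_range _ (by simp), finsetSum_coeff]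
  simp only [coeff_C_mul, coeff_X_add_one_pow]

lemma natDegree_taylor_one_sub [CommRing R] [IsDomain R] [CharZero R] {q : R[X]} {n : ℕ}
    (hq : q.natDegree = n + 1) : (taylor 1 q - q).natDegree = n := by
  have hq0 : q ≠ 0 := by rintro rfl; simp at hq
  refine le_antisymm (natDegree_le_iff_coeff_eq_zero.2 fun m hm => ?_) (le_natDegree_of_ne_zero ?_)
  · apply coeff_eq_zero_of_degree_lt
    calc (taylor 1 q - q).degree < (taylor 1 q).degree :=
          degree_sub_lt_left (degree_taylor q 1) (by simpa using hq0) (leadingCoeff_taylor 1 q)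
      _ = (n + 1 : ℕ) := by rw [degree_taylor, degree_eq_natDegree hq0, hq]
      _ ≤ m := by exact_mod_cast hm
  · rw [coeff_sub, coeff_taylor_one, hq, Finset.sum_range_succ, Finset.sum_range_succ,
      Finset.sum_eq_zero fun e he => by rw [Nat.choose_eq_zero_of_lt (Finset.mem_range.1 he)]; simp,
      Nat.choose_self, Nat.choose_succ_self_right]
    have : q.coeff (n + 1) ≠ 0 := by rw [← hq]; exact leadingCoeff_ne_zero.2 hq0
    convert mul_ne_zero (Nat.cast_add_one_ne_zero (R := R) n) this using 1
    push_cast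
    ring

end Polynomial

namespace Submodule

variable {K : Type*} [Field K] {P : Submodule K K[X]}

lemma exists_natDegree_eq_two_mem [CharZero K] (hcomp : ∀ p ∈ P, ∀ q ∈ P, p.comp q ∈ P)
    (h1 : 1 ∈ P) (hX : X ∈ P) {p : K[X]} (hp : p ∈ P) (hdeg : 2 ≤ p.natDegree) :
    ∃ r ∈ P, r.natDegree = 2 := by
  have hΔ : ∀ q ∈ P, taylor 1 q - q ∈ P := fun q hq => by
    rw [taylor_apply, C_1]
    exact P.sub_mem (hcomp q hq _ (P.add_mem hX h1)) hq
  obtain ⟨n, hn⟩ := Nat.exists_eq_add_of_le' hdeg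
  clear hdeg
  induction n generalizing p with
  | zero => exact ⟨p, hp, hn⟩
  | succ n ih => exact ih (hΔ p hp) (natDegree_taylor_one_sub (by omega))

lemma sq_mem_of_natDegree_eq_two (hcomp : ∀ p ∈ P, ∀ q ∈ P, p.comp q ∈ P) (h1 : 1 ∈ P)
    {r : K[X]} (hr : r ∈ P) (hr2 : r.natDegree = 2) {q : K[X]} (hq : q ∈ P) : q ^ 2 ∈ P := by
  have hrq : r.comp q = r.coeff 2 • q ^ 2 + r.coeff 1 • q + r.coeff 0 • 1 := by
    conv_lhs => rw [as_sum_range_C_mul_X_pow r, hr2]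
    simp [Finset.sum_range_succ, smul_eq_C_mul]
    ring
  have ha : r.coeff 2 ≠ 0 := by
    rw [← hr2]; exact leadingCoeff_ne_zero.2 (by rintro rfl; simp at hr2)
  have hsq : r.coeff 2 • q ^ 2 = r.comp q - r.coeff 1 • q - r.coeff 0 • 1 := by
    rw [hrq]; abel
  rw [← P.smul_mem_iff ha, hsq]
  exact P.sub_mem (P.sub_mem (hcomp r hr q hq) (P.smul_mem _ hq)) (P.smul_mem _ h1)

theorem eq_top_of_comp_mem [CharZero K] (hcomp : ∀ p ∈ P, ∀ q ∈ P, p.comp q ∈ P) (h1 : 1 ∈ P)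
    (hX : X ∈ P) {p : K[X]} (hp : p ∈ P) (hdeg : 2 ≤ p.natDegree) : P = ⊤ := by
  obtain ⟨r, hr, hr2⟩ := exists_natDegree_eq_two_mem hcomp h1 hX hp hdeg
  have hsq : ∀ q ∈ P, q ^ 2 ∈ P := fun q hq => sq_mem_of_natDegree_eq_two hcomp h1 hr hr2 hq
  have hmul : ∀ q s, q ∈ P → s ∈ P → q * s ∈ P := fun q s hq hs => by
    have : (2 : K) • (q * s) = (q + s) ^ 2 - q ^ 2 - s ^ 2 := by
      rw [two_smul]; ring
    rw [← P.smul_mem_iff (two_ne_zero' K), this]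
    exact P.sub_mem (P.sub_mem (hsq _ (P.add_mem hq hs)) (hsq q hq)) (hsq s hs)
  have : (⊤ : Subalgebra K K[X]) ≤ P.toSubalgebra h1 hmul := by
    rw [← adjoin_X]
    exact Algebra.adjoin_le (Set.singleton_subset_iff.2 hX)
  exact eq_top_iff.2 fun q _ => this trivial

end Submodule

namespace ContinuousMap

structure AddCompClosed {X : Type*} [TopologicalSpace X] [Add X] [ContinuousAdd X]
    (T : Set C(X, X)) : Prop where
  add_mem {f g : C(X, X)} : f ∈ T → g ∈ T → f + g ∈ T
  comp_mem {f g : C(X, X)} : f ∈ T → g ∈ T → f.comp g ∈ T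

namespace AddCompClosed

lemma closure {X : Type*} [TopologicalSpace X] [LocallyCompactSpace X] [Add X] [ContinuousAdd X]
    {T : Set C(X, X)} (hT : AddCompClosed T) : AddCompClosed (_root_.closure T) where
  add_mem hf hg := map_mem_closure₂ continuous_add hf hg fun _ hf _ hg => hT.add_mem hf hg
  comp_mem hf hg := map_mem_closure₂ (continuous_comp'.comp continuous_swap) hf hg
    fun _ hf _ hg => hT.comp_mem hf hg

end AddCompClosed

noncomputable def oneSubHalf : C(ℝ, ℝ) := ⟨fun t => 1 - t / 2, by fun_prop⟩

namespace AddCompClosed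

variable {T : Set C(ℝ, ℝ)}

lemma two_sub_id_mem (hT : AddCompClosed T) (h : oneSubHalf ∈ T) :
    const ℝ 2 - ContinuousMap.id ℝ ∈ T := by
  convert hT.add_mem h h using 1
  ext t; simp [oneSubHalf]; ring

lemma id_mem (hT : AddCompClosed T) (h : oneSubHalf ∈ T) : ContinuousMap.id ℝ ∈ T := by
  convert hT.comp_mem (hT.two_sub_id_mem h) (hT.two_sub_id_mem h) using 1
  ext t; simp

lemma neg_mem (hT : AddCompClosed T) (h : oneSubHalf ∈ T) {f : C(ℝ, ℝ)} (hf : f ∈ T) :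
    -f ∈ T := by
  have htwo : const ℝ 2 ∈ T := by
    convert hT.add_mem (hT.two_sub_id_mem h) (hT.id_mem h) using 1
    ext t; simp
  convert hT.comp_mem (hT.two_sub_id_mem h) (hT.add_mem hf htwo) using 1
  ext t; simp

lemma half_smul_id_mem (hT : AddCompClosed T) (h : oneSubHalf ∈ T) :
    (2⁻¹ : ℝ) • ContinuousMap.id ℝ ∈ T := by
  convert hT.comp_mem h (hT.two_sub_id_mem h) using 1
  ext t; simp [oneSubHalf]; ring

def slopes (hT : AddCompClosed T) (h : oneSubHalf ∈ T) : Subring ℝ where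
  carrier := {c | c • ContinuousMap.id ℝ ∈ T}
  one_mem' := by simpa using hT.id_mem h
  mul_mem' {c d} hc hd := by
    show (c * d) • ContinuousMap.id ℝ ∈ T
    convert hT.comp_mem hc hd using 1
    ext t; simp [mul_assoc]
  add_mem' {c d} hc hd := by
    show (c + d) • ContinuousMap.id ℝ ∈ T
    convert hT.add_mem hc hd using 1
    ext t; simp [add_mul]
  zero_mem' := by
    show (0 : ℝ) • ContinuousMap.id ℝ ∈ T
    convert hT.add_mem (hT.id_mem h) (hT.neg_mem h (hT.id_mem h)) using 1
    ext t; simp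
  neg_mem' {c} hc := by
    show (-c) • ContinuousMap.id ℝ ∈ T
    convert hT.neg_mem h hc using 1
    ext t; simp

lemma dense_slopes (hT : AddCompClosed T) (h : oneSubHalf ∈ T) :
    Dense (hT.slopes h : Set ℝ) := by
  have hhalf : (2⁻¹ : ℝ) ∈ hT.slopes h := hT.half_smul_id_mem h
  refine (hT.slopes h).toAddSubgroup.dense_of_no_min (fun hbot => ?_) ?_
  · have : (1 : ℝ) ∈ (⊥ : AddSubgroup ℝ) := hbot ▸ (hT.slopes h).one_mem
    simp at this
  · rintro ⟨a, ⟨ha, ha0⟩, hmin⟩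
    have : a ≤ 2⁻¹ * a := hmin ⟨(hT.slopes h).mul_mem hhalf ha, by positivity⟩
    linarith

lemma smul_id_mem (hT : AddCompClosed T) (h : oneSubHalf ∈ T) (hclosed : IsClosed T) (c : ℝ) :
    c • ContinuousMap.id ℝ ∈ T := by
  have hslopes : IsClosed (hT.slopes h : Set ℝ) := hclosed.preimage (by fun_prop)
  show c ∈ (hT.slopes h : Set ℝ)
  rw [← hslopes.closure_eq, (hT.dense_slopes h).closure_eq]
  trivial

def toSubmodule (hT : AddCompClosed T) (h : oneSubHalf ∈ T) (hclosed : IsClosed T) :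
    Submodule ℝ C(ℝ, ℝ) where
  carrier := T
  add_mem' := hT.add_mem
  zero_mem' := by simpa using hT.smul_id_mem h hclosed 0
  smul_mem' c f hf := by
    convert hT.comp_mem (hT.smul_id_mem h hclosed c) hf using 1
    ext t; simp

lemma toContinuousMap_mem (hT : AddCompClosed T) (h : oneSubHalf ∈ T) (hclosed : IsClosed T)
    {p₁ : ℝ[X]} (hp₁ : p₁.toContinuousMap ∈ T) (hdeg : 2 ≤ p₁.natDegree) (p : ℝ[X]) :
    p.toContinuousMap ∈ T := by
  let P := (hT.toSubmodule h hclosed).comap (toContinuousMapAlgHom (R := ℝ)).toLinearMap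
  have hmem : ∀ q : ℝ[X], q ∈ P ↔ q.toContinuousMap ∈ T := fun q => Iff.rfl
  have hone : (1 : C(ℝ, ℝ)) ∈ T := by
    convert hT.comp_mem h ((hT.toSubmodule h hclosed).zero_mem) using 1
    ext t; simp [oneSubHalf]
  have hP : P = ⊤ := by
    refine Submodule.eq_top_of_comp_mem (fun q hq r hr => ?_) ?_ ?_ ((hmem p₁).2 hp₁) hdeg
    · rw [hmem] at *
      convert hT.comp_mem hq hr using 1
      ext t; simp
    · rw [hmem]; convert hone using 1; ext t; simp
    · rw [hmem]; convert hT.id_mem h using 1; ext t; simp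
  exact (hmem p).1 (hP ▸ Submodule.mem_top)

end AddCompClosed

end ContinuousMap

theorem stmt11_general (g₁ : ℝ → ℝ) (p₁ : Polynomial ℝ) (hg₁ : ∀ t, g₁ t = p₁.eval t)
    (hdeg : 2 ≤ p₁.natDegree) (S : Set (ℝ → ℝ))
    (hS₁ : g₁ ∈ S) (hS₂ : (fun t : ℝ => 1 - t / 2) ∈ S)
    (hadd : ∀ f ∈ S, ∀ h ∈ S, (f + h) ∈ S)
    (hcomp : ∀ f ∈ S, ∀ h ∈ S, (f ∘ h) ∈ S) :
    ∀ p : Polynomial ℝ, ∃ F : ℕ → ℝ → ℝ, (∀ n, F n ∈ S) ∧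
      ∀ K : Set ℝ, IsCompact K →
        TendstoUniformlyOn F (fun t => p.eval t) Filter.atTop K := by
  let T : Set C(ℝ, ℝ) := {f | ⇑f ∈ S}
  have hT : ContinuousMap.AddCompClosed T :=
    ⟨fun hf hg => hadd _ hf _ hg, fun hf hg => hcomp _ hf _ hg⟩
  have h₁ : p₁.toContinuousMap ∈ T := by
    show ⇑p₁.toContinuousMap ∈ S
    convert hS₁ using 1; ext t; simp [hg₁]
  intro p
  -- `C(ℝ, ℝ)` is first countable (`ℝ` is σ-compact), so closure points are limits of sequences.
  obtain ⟨F, hFT, hF⟩ := mem_closure_iff_seq_limit.1 <| hT.closure.toContinuousMap_mem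
    (subset_closure hS₂) isClosed_closure (subset_closure h₁) hdeg p
  exact ⟨fun n => F n, hFT, ContinuousMap.tendsto_iff_forall_isCompact_tendstoUniformlyOn.1 hF⟩

theorem stmt11 (g₁ : ℝ → ℝ) (p₁ : Polynomial ℝ) (hg₁ : ∀ t, g₁ t = p₁.eval t)
    (hdeg : 2 ≤ p₁.natDegree) (S : Set (ℝ → ℝ))
    (hS₁ : g₁ ∈ S) (hS₂ : (fun t : ℝ => 1 - t / 2) ∈ S)
    (hadd : ∀ f ∈ S, ∀ h ∈ S, (f + h) ∈ S)
    (hcomp : ∀ f ∈ S, ∀ h ∈ S, (f ∘ h) ∈ S)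
    (hmin : ∀ T : Set (ℝ → ℝ), g₁ ∈ T → (fun t : ℝ => 1 - t / 2) ∈ T →
      (∀ f ∈ T, ∀ h ∈ T, (f + h) ∈ T) →
      (∀ f ∈ T, ∀ h ∈ T, (f ∘ h) ∈ T) → S ⊆ T) :
    ∀ p : Polynomial ℝ, ∃ F : ℕ → ℝ → ℝ, (∀ n, F n ∈ S) ∧
      ∀ K : Set ℝ, IsCompact K →
        TendstoUniformlyOn F (fun t => p.eval t) Filter.atTop K :=
  stmt11_general g₁ p₁ hg₁ hdeg S hS₁ hS₂ hadd hcomp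
end

section
/- Let g₁ : ℝ → ℝ be continuous and not affine (not of the form t ↦ a·t + b), and let g₂(t) = 1 - t/2. Let S be the smallest class of functions ℝ → ℝ containing g₁ and g₂ and closed under pointwise addition and composition. Then for every compact K ⊂ ℝ, every continuous f : K → ℝ, and every ε > 0, there exists F ∈ S with sup_{x ∈ K} |f(x) - F(x)| < ε. -/
/-!
Pass to the closure `A`, in `C(ℝ, ℝ)` with the compact-open topology, of the continuous members of
`S`; it is still closed under addition and composition. Starting from `t ↦ 1 - t / 2`, the
constants and the slopes of the linear maps in `A` form closed additive subgroups of `ℝ` that are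
stable under halving, so `A` contains every affine map; hence `A` is a closed vector space stable
under affine changes of variable. Riemann sums show that `A` contains the sliding integrals
`t ↦ ∫ s in t..t + l, g s`. Integrating the non-affine `g₁` twice gives an element of `A` whose derivative
is differentiable with nonzero derivative at some point, and its rescaled second-order Taylor
quotients converge to `t ↦ t ^ 2`. Polarisation `f * g = ((f + g) ^ 2 - f ^ 2 - g ^ 2) / 2` then
makes `A` a subalgebra containing the identity, and Stone–Weierstrass, applied to a Tietze
extension of `f`, finishes the proof.
-/

open Filter Set Topology

lemma eq_univ_of_isClosed_of_neg_half_mem {C : Set ℝ} (hC : IsClosed C) (h1 : (1 : ℝ) ∈ C)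
    (hadd : ∀ x ∈ C, ∀ y ∈ C, x + y ∈ C) (hhalf : ∀ x ∈ C, -(x / 2) ∈ C) : C = univ := by
  have hneg : ∀ x ∈ C, -x ∈ C := fun x hx => by
    convert hadd _ (hhalf x hx) _ (hhalf x hx) using 1; ring
  let G : AddSubgroup ℝ :=
    { carrier := C
      add_mem' := fun ha hb => hadd _ ha _ hb
      zero_mem' := by simpa using hadd _ h1 _ (hneg 1 h1)
      neg_mem' := fun ha => hneg _ ha }
  have hdense : Dense (G : Set ℝ) := by
    have hbot : G ≠ ⊥ := fun h =>
      one_ne_zero (AddSubgroup.mem_bot.1 (h ▸ h1 : (1 : ℝ) ∈ (⊥ : AddSubgroup ℝ)))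
    refine G.dense_of_no_min hbot ?_
    rintro ⟨a, ⟨ha, ha0⟩, hmin⟩
    have : a / 2 ∈ C := by simpa using hneg _ (hhalf a ha)
    linarith [hmin (show a / 2 ∈ {g | g ∈ G ∧ 0 < g} from ⟨this, half_pos ha0⟩)]
  simpa [G, hC.closure_eq] using hdense.closure_eq

lemma exists_secondDiff_ne_zero {g : ℝ → ℝ} (hg : Continuous g)
    (hna : ¬ ∃ a b : ℝ, g = fun t => a * t + b) :
    ∃ x l, 0 < l ∧ g (x + l + l) - g (x + l) - (g (x + l) - g x) ≠ 0 := by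
  by_contra! h
  have hmid (x y : ℝ) (hxy : x < y) : g ((x + y) / 2) = (g x + g y) / 2 := by
    have := h x ((y - x) / 2) (by linarith)
    rw [show x + (y - x) / 2 + (y - x) / 2 = y by ring,
      show x + (y - x) / 2 = (x + y) / 2 by ring] at this
    linarith
  have hmid' (x y : ℝ) : g (midpoint ℝ x y) = midpoint ℝ (g x) (g y) := by
    have hm (a b : ℝ) : midpoint ℝ a b = (a + b) / 2 := by
      rw [midpoint_eq_smul_add, smul_eq_mul, invOf_eq_inv]; ring
    rw [hm, hm]
    rcases lt_trichotomy x y with hxy | rfl | hxy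
    · exact hmid x y hxy
    · ring_nf
    · rw [add_comm x, add_comm (g x), hmid y x hxy]
  let F : ℝ →ᵃ[ℝ] ℝ := AffineMap.ofMapMidpoint g hmid' hg
  refine hna ⟨F.linear 1, g 0, funext fun t => ?_⟩
  have hF : g t = F.linear t + g 0 := congrFun F.decomp t
  have hlin : F.linear t = t * F.linear 1 := by
    rw [← smul_eq_mul, ← F.linear.map_smul, smul_eq_mul, mul_one]
  rw [hF, hlin, mul_comm]

lemma isLittleO_sub_taylor_two {φ φ' : ℝ → ℝ} {x c : ℝ} (hφ : ∀ y, HasDerivAt φ (φ' y) y)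
    (hφ' : HasDerivAt φ' c x) :
    (fun y => φ y - φ x - (y - x) * φ' x - c * (y - x) ^ 2 / 2) =o[𝓝 x]
      fun y => (y - x) ^ 2 := by
  have hderiv (y : ℝ) : HasDerivAt (fun y => φ y - φ x - (y - x) * φ' x - c * (y - x) ^ 2 / 2)
      (φ' y - φ' x - (y - x) * c) y := by
    have hsq := ((((hasDerivAt_id y).sub_const x).pow 2).const_mul c).div_const 2
    have hlin := ((hasDerivAt_id y).sub_const x).mul_const (φ' x)
    refine ((((hφ y).sub_const (φ x)).sub hlin).sub hsq).congr_deriv ?_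
    simp only [id_eq, Nat.cast_ofNat, Nat.add_one_sub_one, pow_one]
    ring
  have h := convex_univ.isLittleO_pow_succ_real (mem_univ x)
    (fun y _ => (hderiv y).hasDerivWithinAt) (n := 1) (by simpa using hφ'.isLittleO)
  simpa using h

lemma hasDerivAt_integral_add_const {f : ℝ → ℝ} (hf : Continuous f) (l t : ℝ) :
    HasDerivAt (fun u => ∫ s in u..u + l, f s) (f (t + l) - f t) t := by
  have hprim (u : ℝ) : HasDerivAt (fun v => ∫ s in (0 : ℝ)..v, f s) (f u) u :=
    (hf.integral_hasStrictDerivAt 0 u).hasDerivAt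
  refine (((hprim (t + l)).comp_add_const t l).sub (hprim t)).congr_of_eventuallyEq
    (Eventually.of_forall fun u => ?_)
  exact (intervalIntegral.integral_interval_sub_left (hf.intervalIntegrable _ _)
    (hf.intervalIntegrable _ _)).symm

lemma abs_integral_sub_mul_le {f : ℝ → ℝ} (hf : Continuous f) {b h ε : ℝ} (hh : 0 ≤ h)
    (hε : ∀ s ∈ Icc b (b + h), |f s - f b| ≤ ε) :
    |(∫ s in b..b + h, f s) - h * f b| ≤ h * ε := by
  have hsub : (∫ s in b..b + h, f s) - h * f b = ∫ s in b..b + h, (f s - f b) := by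
    rw [intervalIntegral.integral_sub (hf.intervalIntegrable _ _) intervalIntegrable_const,
      intervalIntegral.integral_const, smul_eq_mul, add_sub_cancel_left]
  have hbound := intervalIntegral.norm_integral_le_of_norm_le_const (a := b) (b := b + h)
    (f := fun s => f s - f b) fun s hs =>
    hε s (Ioc_subset_Icc_self (by rwa [uIoc_of_le (by linarith)] at hs))
  rw [hsub]
  simpa [abs_of_nonneg hh, mul_comm] using hbound

lemma abs_integral_sub_riemannSum_le {f : ℝ → ℝ} (hf : Continuous f) {a h ε : ℝ} (hh : 0 ≤ h)
    (n : ℕ) (hε : ∀ s ∈ Icc a (a + n * h), ∀ s' ∈ Icc a (a + n * h), |s - s'| ≤ h →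
      |f s - f s'| ≤ ε) :
    |(∫ s in a..a + n * h, f s) - ∑ k ∈ Finset.range n, h * f (a + k * h)| ≤ n * (h * ε) := by
  induction n with
  | zero => simp
  | succ n ih =>
    have hsub : Icc a (a + n * h) ⊆ Icc a (a + (n + 1 : ℕ) * h) :=
      Icc_subset_Icc_right (by push_cast; linarith)
    have hstep := abs_integral_sub_mul_le hf (b := a + n * h) (ε := ε) hh fun s hs =>
      hε s ⟨by nlinarith [hs.1, n.cast_nonneg (α := ℝ)], by push_cast; linarith [hs.2]⟩
        _ ⟨by nlinarith [n.cast_nonneg (α := ℝ)], by push_cast; linarith⟩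
        (by rw [abs_of_nonneg (by linarith [hs.1])]; linarith [hs.2])
    have hsplit : (∫ s in a..a + (n + 1 : ℕ) * h, f s) =
        (∫ s in a..a + n * h, f s) + ∫ s in a + n * h..a + n * h + h, f s := by
      rw [intervalIntegral.integral_add_adjacent_intervals (hf.intervalIntegrable _ _)
        (hf.intervalIntegrable _ _)]
      push_cast; ring_nf
    rw [hsplit, Finset.sum_range_succ]
    calc _ = |((∫ s in a..a + n * h, f s) - ∑ k ∈ Finset.range n, h * f (a + k * h)) +
          ((∫ s in a + n * h..a + n * h + h, f s) - h * f (a + n * h))| := by ring_nf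
      _ ≤ n * (h * ε) + h * ε :=
          (abs_add_le _ _).trans (add_le_add (ih fun s hs s' hs' => hε s (hsub hs) s' (hsub hs'))
            hstep)
      _ = (n + 1 : ℕ) * (h * ε) := by push_cast; ring

lemma exists_mem_forall_dist_lt_of_mem_closure {X β : Type*} [TopologicalSpace X]
    [PseudoMetricSpace β] {T : Set C(X, β)} {f : C(X, β)} (hf : f ∈ closure T) {K : Set X}
    (hK : IsCompact K) {ε : ℝ} (hε : 0 < ε) : ∃ F ∈ T, ∀ x ∈ K, dist (f x) (F x) < ε :=
  ((mem_closure_iff_frequently.1 hf).and_eventually (Metric.tendstoUniformlyOn_iff.1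
    (ContinuousMap.tendsto_iff_forall_isCompact_tendstoUniformlyOn.1 tendsto_id K hK) ε hε)).exists

def affineFun (a b : ℝ) : C(ℝ, ℝ) := ⟨fun t => a * t + b, by fun_prop⟩

@[simp]
lemma affineFun_apply (a b t : ℝ) : affineFun a b t = a * t + b := rfl

lemma affineFun_comp (a b c d : ℝ) :
    (affineFun a b).comp (affineFun c d) = affineFun (a * c) (a * d + b) := by
  ext t; simp only [ContinuousMap.comp_apply, affineFun_apply]; ring

lemma affineFun_add (a b c d : ℝ) :
    affineFun a b + affineFun c d = affineFun (a + c) (b + d) := by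
  ext t; simp only [ContinuousMap.add_apply, affineFun_apply]; ring

lemma continuous_affineFun : Continuous fun p : ℝ × ℝ => affineFun p.1 p.2 :=
  (ContinuousMap.curry ⟨fun q : (ℝ × ℝ) × ℝ => q.1.1 * q.2 + q.1.2, by fun_prop⟩).continuous

noncomputable def slidingIntegral (f : C(ℝ, ℝ)) (l : ℝ) : C(ℝ, ℝ) :=
  ⟨fun t => ∫ s in t..t + l, f s, continuous_iff_continuousAt.2 fun t =>
    (hasDerivAt_integral_add_const f.continuous l t).continuousAt⟩

lemma tendsto_riemannSum_slidingIntegral (f : C(ℝ, ℝ)) {l : ℝ} (hl : 0 ≤ l) :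
    Tendsto (fun n : ℕ => ∑ k ∈ Finset.range n, (l / n) • f.comp (affineFun 1 (k * (l / n))))
      atTop (𝓝 (slidingIntegral f l)) := by
  refine ContinuousMap.tendsto_iff_forall_isCompact_tendstoUniformlyOn.2 fun K hK =>
    Metric.tendstoUniformlyOn_iff.2 fun ε hε => ?_
  obtain ⟨a, ha⟩ := hK.bddBelow
  obtain ⟨b, hb⟩ := hK.bddAbove
  have hε' : 0 < ε / (l + 1) := by positivity
  obtain ⟨δ, hδ, hfδ⟩ := Metric.uniformContinuousOn_iff_le.1
    (isCompact_Icc.uniformContinuousOn_of_continuous f.continuous.continuousOn :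
      UniformContinuousOn f (Icc a (b + l))) _ hε'
  have hfine : ∀ᶠ n : ℕ in atTop, l / n ≤ δ :=
    (tendsto_const_div_atTop_nhds_zero_nat l).eventually (eventually_le_nhds hδ)
  filter_upwards [hfine, eventually_ne_atTop 0] with n hn hn0 t ht
  have hend : t + n * (l / n) = t + l := by field_simp
  have hsum := abs_integral_sub_riemannSum_le f.continuous (a := t) (div_nonneg hl n.cast_nonneg)
    n fun s hs s' hs' hss' => by
      rw [hend] at hs hs'
      have hIcc : Icc t (t + l) ⊆ Icc a (b + l) :=
        Icc_subset_Icc (ha ht) (by linarith [hb ht])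
      simpa [Real.dist_eq] using hfδ s (hIcc hs) s' (hIcc hs') (by rw [Real.dist_eq]; linarith)
  rw [hend] at hsum
  have hnl : (n : ℝ) * (l / n * (ε / (l + 1))) = l * (ε / (l + 1)) := by field_simp
  rw [Real.dist_eq]
  calc _ = |(∫ s in t..t + l, f s) - ∑ k ∈ Finset.range n, l / n * f (t + k * (l / n))| := by
        simp [slidingIntegral, add_comm]
    _ ≤ l * (ε / (l + 1)) := hnl ▸ hsum
    _ < ε := by rw [mul_div_assoc', div_lt_iff₀ (by linarith)]; nlinarith

lemma tendsto_taylorQuotient (φ : C(ℝ, ℝ)) {φ' : ℝ → ℝ} {x c : ℝ}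
    (hφ : ∀ y, HasDerivAt φ (φ' y) y) (hφ' : HasDerivAt φ' c x) (hc : c ≠ 0) :
    Tendsto (fun h : ℝ => (2 / (c * h ^ 2)) • (φ.comp (affineFun h x) - affineFun (h * φ' x) (φ x)))
      (𝓝[≠] 0) (𝓝 (ContinuousMap.id ℝ ^ 2)) := by
  refine ContinuousMap.tendsto_iff_forall_isCompact_tendstoUniformlyOn.2 fun K hK =>
    Metric.tendstoUniformlyOn_iff.2 fun ε hε => ?_
  obtain ⟨M, hM⟩ := hK.isBounded.exists_norm_le
  set M' := |M| + 1
  have hM' : ∀ t ∈ K, |t| < M' := fun t ht => by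
    have := hM t ht; rw [Real.norm_eq_abs] at this; linarith [le_abs_self M]
  have hε' : 0 < ε * |c| / (2 * M' ^ 2) := by positivity
  obtain ⟨δ, hδ, hψ⟩ := Metric.eventually_nhds_iff.1
    ((isLittleO_sub_taylor_two hφ hφ').def hε')
  filter_upwards [self_mem_nhdsWithin, nhdsWithin_le_nhds (Metric.ball_mem_nhds 0
    (div_pos hδ (by positivity : (0 : ℝ) < M')))] with h (hh : h ≠ 0) hhδ t ht
  rw [Metric.mem_ball, dist_zero_right, Real.norm_eq_abs, lt_div_iff₀ (by positivity)] at hhδ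
  have hdist : dist (h * t + x) x < δ := by
    rw [Real.dist_eq, add_sub_cancel_right, abs_mul]
    calc |h| * |t| ≤ |h| * M' := by gcongr; exact (hM' t ht).le
      _ < δ := hhδ
  have hbound := hψ hdist
  simp only [add_sub_cancel_right, Real.norm_eq_abs, abs_pow, sq_abs] at hbound
  have hq : ((2 / (c * h ^ 2)) • (φ.comp (affineFun h x) - affineFun (h * φ' x) (φ x))) t - t ^ 2
      = 2 / (c * h ^ 2) * (φ (h * t + x) - φ x - h * t * φ' x - c * (h * t) ^ 2 / 2) := by
    simp only [ContinuousMap.coe_smul, ContinuousMap.coe_sub, ContinuousMap.coe_comp,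
      Pi.smul_apply, Pi.sub_apply, Function.comp_apply, affineFun_apply, smul_eq_mul]
    field_simp; ring
  rw [Real.dist_eq, abs_sub_comm]
  simp only [ContinuousMap.pow_apply, ContinuousMap.id_apply]
  rw [hq, abs_mul]
  have hcoef : |2 / (c * h ^ 2)| = 2 / (|c| * h ^ 2) := by
    rw [abs_div, abs_mul, abs_of_pos (by positivity : (0 : ℝ) < h ^ 2), abs_two]
  have ht2 : t ^ 2 < M' ^ 2 := by
    rw [← sq_abs]; exact pow_lt_pow_left₀ (hM' t ht) (abs_nonneg t) two_ne_zero
  calc |2 / (c * h ^ 2)| * |φ (h * t + x) - φ x - h * t * φ' x - c * (h * t) ^ 2 / 2|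
      ≤ 2 / (|c| * h ^ 2) * (ε * |c| / (2 * M' ^ 2) * (h * t) ^ 2) := by
        rw [hcoef]; gcongr
    _ = ε * (t ^ 2 / M' ^ 2) := by field_simp
    _ < ε * 1 := by gcongr; rwa [div_lt_one (by positivity)]
    _ = ε := mul_one ε

structure IsAddCompClosed (A : Set C(ℝ, ℝ)) : Prop where
  isClosed : IsClosed A
  add_mem : ∀ ⦃f g⦄, f ∈ A → g ∈ A → f + g ∈ A
  comp_mem : ∀ ⦃f g⦄, f ∈ A → g ∈ A → f.comp g ∈ A

namespace IsAddCompClosed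

variable {A : Set C(ℝ, ℝ)}

lemma of_closure {T : Set C(ℝ, ℝ)} (hadd : ∀ f ∈ T, ∀ g ∈ T, f + g ∈ T)
    (hcomp : ∀ f ∈ T, ∀ g ∈ T, f.comp g ∈ T) : IsAddCompClosed (closure T) where
  isClosed := isClosed_closure
  add_mem _ _ hf hg := map_mem_closure₂ continuous_add hf hg hadd
  comp_mem _ _ hf hg := map_mem_closure₂ (ContinuousMap.continuous_comp'.comp
      (continuous_snd.prodMk continuous_fst)) hf hg hcomp

lemma affineFun_mem (hA : IsAddCompClosed A) (h₂ : affineFun (-(1 / 2)) 1 ∈ A) (a b : ℝ) :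
    affineFun a b ∈ A := by
  have comp {a b c d : ℝ} (h : affineFun a b ∈ A) (h' : affineFun c d ∈ A) :
      affineFun (a * c) (a * d + b) ∈ A := affineFun_comp a b c d ▸ hA.comp_mem h h'
  have add {a b c d : ℝ} (h : affineFun a b ∈ A) (h' : affineFun c d ∈ A) :
      affineFun (a + c) (b + d) ∈ A := affineFun_add a b c d ▸ hA.add_mem h h'
  have hquarter : affineFun (1 / 4) (1 / 2) ∈ A := by convert comp h₂ h₂ using 2 <;> norm_num
  have hstep {b : ℝ} (h : affineFun 0 b ∈ A) : affineFun 0 (1 - b / 2) ∈ A := by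
    convert comp h₂ h using 2 <;> ring
  have h2 : affineFun 0 2 ∈ A := by
    convert add (add hquarter h₂) hquarter using 2 <;> norm_num
  have h1 : affineFun 0 1 ∈ A := by convert hstep (hstep h2) using 2; norm_num
  have h4 : affineFun 0 4 ∈ A := by convert add h2 h2 using 2 <;> norm_num
  have hm1 : affineFun 0 (-1) ∈ A := by convert hstep h4 using 2; norm_num
  have hslope : affineFun (-(1 / 2)) 0 ∈ A := by convert add h₂ hm1 using 2 <;> norm_num
  have hconst : {b | affineFun 0 b ∈ A} = univ := by
    refine eq_univ_of_isClosed_of_neg_half_mem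
      (hA.isClosed.preimage (continuous_affineFun.comp (continuous_const.prodMk continuous_id)))
      h1 (fun x hx y hy => by simpa using add hx hy) fun x hx => ?_
    show affineFun 0 _ ∈ A
    convert add (hstep hx) hm1 using 2 <;> ring
  have hlin : {a | affineFun a 0 ∈ A} = univ := by
    have hhalf : affineFun (1 / 2) 0 ∈ A := by
      convert add (comp hslope hslope) (comp hslope hslope) using 2 <;> norm_num
    refine eq_univ_of_isClosed_of_neg_half_mem
      (hA.isClosed.preimage (continuous_affineFun.comp (continuous_id.prodMk continuous_const)))
      (by convert add hhalf hhalf using 2; norm_num)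
      (fun x hx y hy => by simpa using add hx hy) fun x hx => ?_
    show affineFun _ 0 ∈ A
    convert comp hslope hx using 2 <;> ring
  simpa using add (eq_univ_iff_forall.1 hlin a) (eq_univ_iff_forall.1 hconst b)

def toSubmodule (hA : IsAddCompClosed A) (haff : ∀ a b, affineFun a b ∈ A) :
    Submodule ℝ C(ℝ, ℝ) where
  carrier := A
  add_mem' hf hg := hA.add_mem hf hg
  zero_mem' := by convert haff 0 0; ext; simp
  smul_mem' c f hf := by
    convert hA.comp_mem (haff c 0) hf; ext; simp

lemma slidingIntegral_mem (hA : IsAddCompClosed A) (haff : ∀ a b, affineFun a b ∈ A)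
    {f : C(ℝ, ℝ)} (hf : f ∈ A) {l : ℝ} (hl : 0 ≤ l) : slidingIntegral f l ∈ A :=
  hA.isClosed.mem_of_tendsto (tendsto_riemannSum_slidingIntegral f hl) <| .of_forall fun _ =>
    (hA.toSubmodule haff).sum_mem fun _ _ =>
      (hA.toSubmodule haff).smul_mem _ (hA.comp_mem hf (haff _ _))

lemma sq_mem_of_hasDerivAt (hA : IsAddCompClosed A) (haff : ∀ a b, affineFun a b ∈ A)
    {φ : C(ℝ, ℝ)} (hφA : φ ∈ A) {φ' : ℝ → ℝ} {x c : ℝ} (hφ : ∀ y, HasDerivAt φ (φ' y) y)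
    (hφ' : HasDerivAt φ' c x) (hc : c ≠ 0) : ContinuousMap.id ℝ ^ 2 ∈ A :=
  hA.isClosed.mem_of_tendsto (tendsto_taylorQuotient φ hφ hφ' hc) <| .of_forall fun _ =>
    (hA.toSubmodule haff).smul_mem _
      ((hA.toSubmodule haff).sub_mem (hA.comp_mem hφA (haff _ _)) (haff _ _))

lemma sq_mem (hA : IsAddCompClosed A) (haff : ∀ a b, affineFun a b ∈ A) {g : C(ℝ, ℝ)}
    (hg : g ∈ A) (hna : ¬ ∃ a b : ℝ, ⇑g = fun t => a * t + b) : ContinuousMap.id ℝ ^ 2 ∈ A := by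
  obtain ⟨x, l, hl, hc⟩ := exists_secondDiff_ne_zero g.continuous hna
  let G := slidingIntegral g l
  have hG' := hasDerivAt_integral_add_const g.continuous l
  exact hA.sq_mem_of_hasDerivAt haff
    (hA.slidingIntegral_mem haff (hA.slidingIntegral_mem haff hg hl.le) hl.le)
    (φ' := fun y => G (y + l) - G y) (hasDerivAt_integral_add_const G.continuous l)
    ((hG' (x + l)).comp_add_const x l |>.sub (hG' x)) hc

def toSubalgebra (hA : IsAddCompClosed A) (haff : ∀ a b, affineFun a b ∈ A)
    (hsq : ContinuousMap.id ℝ ^ 2 ∈ A) : Subalgebra ℝ C(ℝ, ℝ) :=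
  (hA.toSubmodule haff).toSubalgebra (show (1 : C(ℝ, ℝ)) ∈ A by convert haff 0 1; ext; simp)
    fun f g hf hg => by
    let B := hA.toSubmodule haff
    have hsqB {u : C(ℝ, ℝ)} (hu : u ∈ A) : (ContinuousMap.id ℝ ^ 2).comp u ∈ B :=
      hA.comp_mem hsq hu
    convert B.smul_mem (1 / 2 : ℝ) (B.sub_mem (B.sub_mem (hsqB (hA.add_mem hf hg)) (hsqB hf))
      (hsqB hg)) using 1
    ext t
    simp only [ContinuousMap.mul_apply, ContinuousMap.pow_comp, ContinuousMap.id_comp,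
      ContinuousMap.coe_smul, ContinuousMap.coe_sub, ContinuousMap.coe_pow, ContinuousMap.coe_add,
      Pi.smul_apply, Pi.sub_apply, Pi.pow_apply, Pi.add_apply, smul_eq_mul]
    ring

lemma exists_mem_forall_abs_sub_lt (hA : IsAddCompClosed A) (h₂ : affineFun (-(1 / 2)) 1 ∈ A)
    {g : C(ℝ, ℝ)} (hg : g ∈ A) (hna : ¬ ∃ a b : ℝ, ⇑g = fun t => a * t + b) (f : C(ℝ, ℝ))
    {K : Set ℝ} (hK : IsCompact K) {ε : ℝ} (hε : 0 < ε) :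
    ∃ F ∈ A, ∀ x ∈ K, |F x - f x| < ε := by
  have haff := hA.affineFun_mem h₂
  have hsep : (hA.toSubalgebra haff (hA.sq_mem haff hg hna)).SeparatesPoints :=
    fun x y hxy => ⟨_, ⟨affineFun 1 0, haff 1 0, rfl⟩, by simpa using hxy⟩
  exact ContinuousMap.exists_mem_subalgebra_near_continuous_of_isCompact_of_separatesPoints
    hsep f hK hε

end IsAddCompClosed

theorem stmt12_general (g₁ : ℝ → ℝ) (hg₁c : Continuous g₁)
    (hg₁na : ¬ ∃ a b : ℝ, g₁ = fun t => a * t + b)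
    (S : Set (ℝ → ℝ))
    (hS₁ : g₁ ∈ S) (hS₂ : (fun t : ℝ => 1 - t / 2) ∈ S)
    (hadd : ∀ f ∈ S, ∀ h ∈ S, (f + h) ∈ S)
    (hcomp : ∀ f ∈ S, ∀ h ∈ S, (f ∘ h) ∈ S) :
    ∀ K : Set ℝ, IsCompact K → ∀ f : ℝ → ℝ, ContinuousOn f K →
      ∀ ε > 0, ∃ F ∈ S, ∀ x ∈ K, |f x - F x| < ε := by
  intro K hK f hf ε hε
  let T : Set C(ℝ, ℝ) := {F | ⇑F ∈ S}
  have hA : IsAddCompClosed (closure T) :=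
    .of_closure (fun _ hF _ hG => hadd _ hF _ hG) (fun _ hF _ hG => hcomp _ hF _ hG)
  have h₂ : affineFun (-(1 / 2)) 1 ∈ closure T := subset_closure <| show _ ∈ S by
    convert hS₂ using 1; ext t; simp only [affineFun_apply]; ring
  obtain ⟨f', hf'⟩ :=
    ContinuousMap.exists_restrict_eq hK.isClosed ⟨K.domRestrict f, hf.domRestrict⟩
  obtain ⟨P, hPT, hP⟩ := hA.exists_mem_forall_abs_sub_lt h₂ (g := ⟨g₁, hg₁c⟩)
    (subset_closure hS₁) hg₁na f' hK (half_pos hε)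
  obtain ⟨F, hFT, hF⟩ := exists_mem_forall_dist_lt_of_mem_closure hPT hK (half_pos hε)
  refine ⟨F, hFT, fun x hx => ?_⟩
  have hfx : f x = f' x := (ContinuousMap.congr_fun hf' ⟨x, hx⟩).symm
  rw [hfx]
  calc |f' x - F x| ≤ |P x - f' x| + dist (P x) (F x) := by
        rw [Real.dist_eq, abs_sub_comm (P x)]; exact abs_sub_le _ _ _
    _ < ε / 2 + ε / 2 := add_lt_add (hP x hx) (hF x hx)
    _ = ε := add_halves ε

theorem stmt12 (g₁ : ℝ → ℝ) (hg₁c : Continuous g₁)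
    (hg₁na : ¬ ∃ a b : ℝ, g₁ = fun t => a * t + b)
    (S : Set (ℝ → ℝ))
    (hS₁ : g₁ ∈ S) (hS₂ : (fun t : ℝ => 1 - t / 2) ∈ S)
    (hadd : ∀ f ∈ S, ∀ h ∈ S, (f + h) ∈ S)
    (hcomp : ∀ f ∈ S, ∀ h ∈ S, (f ∘ h) ∈ S)
    (hmin : ∀ T : Set (ℝ → ℝ), g₁ ∈ T → (fun t : ℝ => 1 - t / 2) ∈ T →
      (∀ f ∈ T, ∀ h ∈ T, (f + h) ∈ T) →
      (∀ f ∈ T, ∀ h ∈ T, (f ∘ h) ∈ T) → S ⊆ T) :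
    ∀ K : Set ℝ, IsCompact K → ∀ f : ℝ → ℝ, ContinuousOn f K →
      ∀ ε > 0, ∃ F ∈ S, ∀ x ∈ K, |f x - F x| < ε :=
  stmt12_general g₁ hg₁c hg₁na S hS₁ hS₂ hadd hcomp
end

section
/- Fix an integer q ≥ 2 and a real b ≠ 0, and let g₂(t) = b - t/q. Let S be the smallest set of functions ℝ → ℝ containing g₂ and closed under pointwise addition and composition. Then the constant functions b and -b, the zero function, the identity t ↦ t, the function t ↦ -t, and the function t ↦ t/q all belong to S. -/
/-!
Iterating `g t = b - t / q` gives `g (g t) = b (1 - 1/q) + t / q²`, so `g + q • (g ∘ g)` is the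
constant `q b`. Feeding constants into `g` produces `0`, `b` and `-b`; then `q • g + q • (-b) = -t`,
`g ∘ (-t) + (-b) = t / q` and `(-t) ∘ (-t) = t`.
-/

theorem nsmul_mem_of_add_mem {M : Type*} [AddMonoid M] {S : Set M}
    (hadd : ∀ x ∈ S, ∀ y ∈ S, x + y ∈ S) {x : M} (hx : x ∈ S) {n : ℕ} (hn : n ≠ 0) :
    n • x ∈ S := by
  obtain ⟨n, rfl⟩ := Nat.exists_eq_succ_of_ne_zero hn
  induction n with
  | zero => simpa using hx
  | succ n ih => rw [succ_nsmul]; exact hadd _ (ih n.succ_ne_zero) _ hx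

structure AddCompClosed {α : Type*} [Add α] (S : Set (α → α)) : Prop where
  add_mem : ∀ f ∈ S, ∀ h ∈ S, f + h ∈ S
  comp_mem : ∀ f ∈ S, ∀ h ∈ S, f ∘ h ∈ S

namespace AddCompClosed

variable {K : Type*} [Field K] {S : Set (K → K)} {q : ℕ} {b : K}

theorem const_mul_mem (hS : AddCompClosed S) (hq : (q : K) ≠ 0)
    (hg : (fun t => b - t / q) ∈ S) : (fun _ => q * b) ∈ S := by
  have hq' : q ≠ 0 := by rintro rfl; simp at hq
  have h := hS.add_mem _ hg _ (nsmul_mem_of_add_mem hS.add_mem (hS.comp_mem _ hg _ hg) hq')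
  convert h using 1
  funext t
  simp only [Pi.add_apply, Pi.smul_apply, Function.comp_apply]
  rw [nsmul_eq_mul]
  field_simp
  ring

theorem zero_mem (hS : AddCompClosed S) (hq : (q : K) ≠ 0)
    (hg : (fun t => b - t / q) ∈ S) : (fun _ => 0) ∈ S := by
  convert hS.comp_mem _ hg _ (hS.const_mul_mem hq hg) using 1
  funext t
  simp [hq]

theorem const_mem (hS : AddCompClosed S) (hq : (q : K) ≠ 0)
    (hg : (fun t => b - t / q) ∈ S) : (fun _ => b) ∈ S := by
  convert hS.comp_mem _ hg _ (hS.zero_mem hq hg) using 1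
  funext t
  simp

theorem neg_const_mem (hS : AddCompClosed S) (hq : (q : K) ≠ 0)
    (hg : (fun t => b - t / q) ∈ S) : (fun _ => -b) ∈ S := by
  have hc := hS.const_mul_mem hq hg
  convert hS.comp_mem _ hg _ (hS.add_mem _ hc _ hc) using 1
  funext t
  simp only [Function.comp_apply, Pi.add_apply]
  field_simp
  ring

theorem neg_mem (hS : AddCompClosed S) (hq : (q : K) ≠ 0)
    (hg : (fun t => b - t / q) ∈ S) : (fun t => -t) ∈ S := by
  have hq' : q ≠ 0 := by rintro rfl; simp at hq
  have hsmul {f : K → K} (hf : f ∈ S) : q • f ∈ S := nsmul_mem_of_add_mem hS.add_mem hf hq'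
  convert hS.add_mem _ (hsmul hg) _ (hsmul (hS.neg_const_mem hq hg)) using 1
  funext t
  simp only [Pi.add_apply, Pi.smul_apply]
  rw [nsmul_eq_mul, nsmul_eq_mul]
  field_simp
  ring

theorem div_mem (hS : AddCompClosed S) (hq : (q : K) ≠ 0)
    (hg : (fun t => b - t / q) ∈ S) : (fun t : K => t / q) ∈ S := by
  convert hS.add_mem _ (hS.comp_mem _ hg _ (hS.neg_mem hq hg)) _ (hS.neg_const_mem hq hg) using 1
  funext t
  simp only [Pi.add_apply, Function.comp_apply]
  ring

theorem id_mem (hS : AddCompClosed S) (hq : (q : K) ≠ 0)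
    (hg : (fun t => b - t / q) ∈ S) : (fun t => t) ∈ S := by
  convert hS.comp_mem _ (hS.neg_mem hq hg) _ (hS.neg_mem hq hg) using 1
  funext t
  simp

end AddCompClosed

theorem stmt17_general (q : ℤ) (hq : 2 ≤ q) (b : ℝ)
    (S : Set (ℝ → ℝ))
    (hg₂ : (fun t : ℝ => b - t / (q : ℝ)) ∈ S)
    (hadd : ∀ f ∈ S, ∀ h ∈ S, (f + h) ∈ S)
    (hcomp : ∀ f ∈ S, ∀ h ∈ S, (f ∘ h) ∈ S) :
    (fun _ : ℝ => b) ∈ S ∧ (fun _ : ℝ => -b) ∈ S ∧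
      (fun _ : ℝ => (0 : ℝ)) ∈ S ∧ (fun t : ℝ => t) ∈ S ∧
      (fun t : ℝ => -t) ∈ S ∧ (fun t : ℝ => t / (q : ℝ)) ∈ S := by
  lift q to ℕ using by omega
  have hS : AddCompClosed S := ⟨hadd, hcomp⟩
  have hq0 : (q : ℝ) ≠ 0 := by exact_mod_cast (by omega : q ≠ 0)
  simp only [Int.cast_natCast] at hg₂ ⊢
  exact ⟨hS.const_mem hq0 hg₂, hS.neg_const_mem hq0 hg₂, hS.zero_mem hq0 hg₂,
    hS.id_mem hq0 hg₂, hS.neg_mem hq0 hg₂, hS.div_mem hq0 hg₂⟩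

theorem stmt17 (q : ℤ) (hq : 2 ≤ q) (b : ℝ) (hb : b ≠ 0)
    (S : Set (ℝ → ℝ))
    (hg₂ : (fun t : ℝ => b - t / (q : ℝ)) ∈ S)
    (hadd : ∀ f ∈ S, ∀ h ∈ S, (f + h) ∈ S)
    (hcomp : ∀ f ∈ S, ∀ h ∈ S, (f ∘ h) ∈ S)
    (hmin : ∀ T : Set (ℝ → ℝ), (fun t : ℝ => b - t / (q : ℝ)) ∈ T →
      (∀ f ∈ T, ∀ h ∈ T, (f + h) ∈ T) →
      (∀ f ∈ T, ∀ h ∈ T, (f ∘ h) ∈ T) → S ⊆ T) :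
    (fun _ : ℝ => b) ∈ S ∧ (fun _ : ℝ => -b) ∈ S ∧
      (fun _ : ℝ => (0 : ℝ)) ∈ S ∧ (fun t : ℝ => t) ∈ S ∧
      (fun t : ℝ => -t) ∈ S ∧ (fun t : ℝ => t / (q : ℝ)) ∈ S :=
  stmt17_general q hq b S hg₂ hadd hcomp
end
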